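/- arXiv:1701.03560 — 4 statements merged into one kernel-verified Lean document; each statement's English description precedes it below -/
import Mathlib

section
/- lim_{l → +∞} λ(l) = 1, where λ(l) = (∫₀^π cos θ e^{l cos θ} sin^{d-2} θ dθ)/(∫₀^π e^{l cos θ} sin^{d-2} θ dθ). -/
/-!
The weight `exp (l * cos θ) * p θ` concentrates at `θ = 0` as `l → ∞`: its mass on `[δ, π]` is at
most `exp (l * cos δ) * ∫ δ..π, p`, its mass on `[0, δ / 2]` at least
`exp (l * cos (δ / 2)) * ∫ 0..δ/2, p`, so the fraction of mass beyond `δ` decays exponentially.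
Since `cos θ ≥ cos δ` on `[0, δ]`, the weighted mean of `cos` eventually exceeds every number
below `cos δ`, for each `δ > 0`, and it never exceeds `1`.
-/

open Real intervalIntegral Filter Set MeasureTheory Topology

section ExpCosWeight

variable {p : ℝ → ℝ} {a b δ l : ℝ}

lemma IntervalIntegrable.mono_of_le (hp : IntervalIntegrable p volume 0 π) (ha : 0 ≤ a)
    (hab : a ≤ b) (hb : b ≤ π) : IntervalIntegrable p volume a b := by
  refine hp.mono_set ?_
  rw [uIcc_of_le hab, uIcc_of_le pi_pos.le]
  exact Icc_subset_Icc ha hb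

lemma IntervalIntegrable.continuous_mul_of_le (hp : IntervalIntegrable p volume 0 π)
    {g : ℝ → ℝ} (hg : Continuous g) (ha : 0 ≤ a) (hab : a ≤ b) (hb : b ≤ π) :
    IntervalIntegrable (fun θ => g θ * p θ) volume a b :=
  (hp.mono_of_le ha hab hb).continuousOn_mul hg.continuousOn

lemma integral_exp_mul_cos_mul_nonneg (hp : IntervalIntegrable p volume 0 π)
    (hpos : ∀ θ ∈ Ioo 0 π, 0 < p θ) (l : ℝ) (ha : 0 ≤ a) (hab : a ≤ b) (hb : b ≤ π) :
    0 ≤ ∫ θ in a..b, exp (l * cos θ) * p θ := by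
  rw [← intervalIntegral.integral_zero]
  refine integral_mono_on_of_le_Ioo hab intervalIntegrable_const
    (hp.continuous_mul_of_le (g := fun θ => exp (l * cos θ)) (by fun_prop) ha hab hb) fun θ hθ => ?_
  exact (mul_pos (exp_pos _) (hpos θ ⟨ha.trans_lt hθ.1, hθ.2.trans_le hb⟩)).le

lemma integral_exp_mul_cos_mul_pos (hp : IntervalIntegrable p volume 0 π)
    (hpos : ∀ θ ∈ Ioo 0 π, 0 < p θ) (l : ℝ) :
    0 < ∫ θ in 0..π, exp (l * cos θ) * p θ :=
  intervalIntegral_pos_of_pos_on (hp.continuous_mul_of_le (by fun_prop) le_rfl pi_pos.le le_rfl)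
    (fun θ hθ => mul_pos (exp_pos _) (hpos θ hθ)) pi_pos

lemma exp_mul_cos_mul_integral_le (hp : IntervalIntegrable p volume 0 π)
    (hpos : ∀ θ ∈ Ioo 0 π, 0 < p θ) (hl : 0 ≤ l) (hδ : 0 ≤ δ) (hδπ : δ ≤ π) :
    exp (l * cos δ) * ∫ θ in 0..δ, p θ ≤ ∫ θ in 0..π, exp (l * cos θ) * p θ := by
  have hsplit := integral_add_adjacent_intervals
    (hp.continuous_mul_of_le (g := fun θ => exp (l * cos θ)) (by fun_prop) le_rfl hδ hδπ)
    (hp.continuous_mul_of_le (by fun_prop) hδ hδπ le_rfl)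
  have hhead : exp (l * cos δ) * ∫ θ in 0..δ, p θ ≤ ∫ θ in 0..δ, exp (l * cos θ) * p θ := by
    rw [← intervalIntegral.integral_const_mul]
    refine integral_mono_on_of_le_Ioo hδ
      (hp.continuous_mul_of_le continuous_const le_rfl hδ hδπ)
      (hp.continuous_mul_of_le (by fun_prop) le_rfl hδ hδπ) fun θ hθ => ?_
    refine mul_le_mul_of_nonneg_right ?_ (hpos θ ⟨hθ.1, hθ.2.trans_le hδπ⟩).le
    exact exp_le_exp.2 <| mul_le_mul_of_nonneg_left
      (cos_le_cos_of_nonneg_of_le_pi hθ.1.le hδπ hθ.2.le) hl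
  linarith [integral_exp_mul_cos_mul_nonneg hp hpos l hδ hδπ le_rfl]

lemma integral_exp_mul_cos_mul_le (hp : IntervalIntegrable p volume 0 π)
    (hpos : ∀ θ ∈ Ioo 0 π, 0 < p θ) (hl : 0 ≤ l) (hδ : 0 ≤ δ) (hδπ : δ ≤ π) :
    ∫ θ in δ..π, exp (l * cos θ) * p θ ≤ exp (l * cos δ) * ∫ θ in δ..π, p θ := by
  rw [← intervalIntegral.integral_const_mul]
  refine integral_mono_on_of_le_Ioo hδπ (hp.continuous_mul_of_le (by fun_prop) hδ hδπ le_rfl)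
    (hp.continuous_mul_of_le continuous_const hδ hδπ le_rfl) fun θ hθ => ?_
  refine mul_le_mul_of_nonneg_right ?_ (hpos θ ⟨hδ.trans_lt hθ.1, hθ.2⟩).le
  exact exp_le_exp.2 <| mul_le_mul_of_nonneg_left
    (cos_le_cos_of_nonneg_of_le_pi hδ hθ.2.le hθ.1.le) hl

theorem tendsto_integral_exp_mul_cos_mul_tail_div (hp : IntervalIntegrable p volume 0 π)
    (hpos : ∀ θ ∈ Ioo 0 π, 0 < p θ) (hδ : 0 < δ) (hδπ : δ ≤ π) :
    Tendsto (fun l => (∫ θ in δ..π, exp (l * cos θ) * p θ) /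
      ∫ θ in 0..π, exp (l * cos θ) * p θ) atTop (𝓝 0) := by
  set A := ∫ θ in δ..π, p θ
  set B := ∫ θ in 0..δ / 2, p θ
  have hB : 0 < B := intervalIntegral_pos_of_pos_on
    (hp.mono_of_le le_rfl (by linarith) (by linarith))
    (fun θ hθ => hpos θ ⟨hθ.1, by linarith [hθ.2]⟩) (by linarith)
  have hA : 0 ≤ A := by simpa using integral_exp_mul_cos_mul_nonneg hp hpos 0 hδ.le hδπ le_rfl
  have hgap : 0 < cos (δ / 2) - cos δ :=
    sub_pos.2 <| cos_lt_cos_of_nonneg_of_le_pi (by linarith) hδπ (by linarith)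
  have hbound : ∀ᶠ l in atTop, (∫ θ in δ..π, exp (l * cos θ) * p θ) /
      (∫ θ in 0..π, exp (l * cos θ) * p θ) ≤ A / B * exp (-((cos (δ / 2) - cos δ) * l)) := by
    filter_upwards [eventually_ge_atTop 0] with l hl
    calc (∫ θ in δ..π, exp (l * cos θ) * p θ) / (∫ θ in 0..π, exp (l * cos θ) * p θ)
        ≤ exp (l * cos δ) * A / (exp (l * cos (δ / 2)) * B) :=
          div_le_div₀ (by positivity) (integral_exp_mul_cos_mul_le hp hpos hl hδ.le hδπ)
            (by positivity) (exp_mul_cos_mul_integral_le hp hpos hl (by linarith) (by linarith))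
      _ = A / B * exp (-((cos (δ / 2) - cos δ) * l)) := by
          rw [show -((cos (δ / 2) - cos δ) * l) = l * cos δ - l * cos (δ / 2) by ring, exp_sub]
          field_simp
  have hlim : Tendsto (fun l => A / B * exp (-((cos (δ / 2) - cos δ) * l))) atTop (𝓝 0) := by
    simpa using (tendsto_exp_neg_atTop_nhds_zero.comp
      (tendsto_id.const_mul_atTop hgap)).const_mul (A / B)
  refine tendsto_of_tendsto_of_tendsto_of_le_of_le' tendsto_const_nhds hlim ?_ hbound
  exact Eventually.of_forall fun l => div_nonneg
    (integral_exp_mul_cos_mul_nonneg hp hpos l hδ.le hδπ le_rfl)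
    (integral_exp_mul_cos_mul_pos hp hpos l).le

lemma integral_cos_mul_exp_mul_cos_mul_le (hp : IntervalIntegrable p volume 0 π)
    (hpos : ∀ θ ∈ Ioo 0 π, 0 < p θ) (l : ℝ) :
    ∫ θ in 0..π, cos θ * exp (l * cos θ) * p θ ≤ ∫ θ in 0..π, exp (l * cos θ) * p θ := by
  refine integral_mono_on_of_le_Ioo pi_pos.le
    (hp.continuous_mul_of_le (g := fun θ => cos θ * exp (l * cos θ)) (by fun_prop)
      le_rfl pi_pos.le le_rfl)
    (hp.continuous_mul_of_le (by fun_prop) le_rfl pi_pos.le le_rfl) fun θ hθ => ?_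
  rw [mul_assoc]
  exact mul_le_of_le_one_left (mul_pos (exp_pos _) (hpos θ hθ)).le (cos_le_one θ)

/-- On `[0, δ]` the integrand is at least `cos δ` times the weight, on `[δ, π]` at least `-1` times
it. -/
lemma cos_mul_integral_sub_le_integral_cos_mul (hp : IntervalIntegrable p volume 0 π)
    (hpos : ∀ θ ∈ Ioo 0 π, 0 < p θ) (l : ℝ) (hδ : 0 ≤ δ) (hδπ : δ ≤ π) :
    cos δ * (∫ θ in 0..π, exp (l * cos θ) * p θ) -
        (1 + cos δ) * ∫ θ in δ..π, exp (l * cos θ) * p θ ≤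
      ∫ θ in 0..π, cos θ * exp (l * cos θ) * p θ := by
  have hw₁ := hp.continuous_mul_of_le (g := fun θ => exp (l * cos θ)) (by fun_prop) le_rfl hδ hδπ
  have hw₂ := hp.continuous_mul_of_le (g := fun θ => exp (l * cos θ)) (by fun_prop) hδ hδπ le_rfl
  have hcw₁ := hp.continuous_mul_of_le (g := fun θ => cos θ * exp (l * cos θ)) (by fun_prop)
    le_rfl hδ hδπ
  have hcw₂ := hp.continuous_mul_of_le (g := fun θ => cos θ * exp (l * cos θ)) (by fun_prop)
    hδ hδπ le_rfl
  have hhead : cos δ * ∫ θ in 0..δ, exp (l * cos θ) * p θ ≤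
      ∫ θ in 0..δ, cos θ * exp (l * cos θ) * p θ := by
    rw [← intervalIntegral.integral_const_mul]
    refine integral_mono_on_of_le_Ioo hδ (hw₁.const_mul _) hcw₁ fun θ hθ => ?_
    rw [← mul_assoc]
    exact mul_le_mul_of_nonneg_right (mul_le_mul_of_nonneg_right
      (cos_le_cos_of_nonneg_of_le_pi hθ.1.le hδπ hθ.2.le) (exp_pos _).le)
      (hpos θ ⟨hθ.1, hθ.2.trans_le hδπ⟩).le
  have htail : -∫ θ in δ..π, exp (l * cos θ) * p θ ≤
      ∫ θ in δ..π, cos θ * exp (l * cos θ) * p θ := by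
    rw [← intervalIntegral.integral_neg]
    refine integral_mono_on_of_le_Ioo hδπ hw₂.neg hcw₂ fun θ hθ => ?_
    rw [mul_assoc, neg_eq_neg_one_mul]
    exact mul_le_mul_of_nonneg_right (neg_one_le_cos θ)
      (mul_pos (exp_pos _) (hpos θ ⟨hδ.trans_lt hθ.1, hθ.2⟩)).le
  rw [← integral_add_adjacent_intervals hw₁ hw₂, ← integral_add_adjacent_intervals hcw₁ hcw₂]
  nlinarith [cos_le_one δ]

theorem tendsto_integral_cos_mul_exp_mul_cos_mul_div (hp : IntervalIntegrable p volume 0 π)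
    (hpos : ∀ θ ∈ Ioo 0 π, 0 < p θ) :
    Tendsto (fun l => (∫ θ in 0..π, cos θ * exp (l * cos θ) * p θ) /
      ∫ θ in 0..π, exp (l * cos θ) * p θ) atTop (𝓝 1) := by
  refine tendsto_order.2 ⟨fun a ha => ?_, fun a ha => Eventually.of_forall fun l => ?_⟩
  · obtain ⟨δ, hδa, hδ, hδπ⟩ : ∃ δ, a < cos δ ∧ δ ∈ Ioo 0 π :=
      (((continuous_cos.tendsto' 0 1 cos_zero).eventually (lt_mem_nhds ha)).filter_mono
        nhdsWithin_le_nhds |>.and (Ioo_mem_nhdsGT pi_pos)).exists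
    have hlim := ((tendsto_integral_exp_mul_cos_mul_tail_div hp hpos hδ hδπ.le).const_mul
      (1 + cos δ)).const_sub (cos δ)
    rw [mul_zero, sub_zero] at hlim
    filter_upwards [hlim.eventually (lt_mem_nhds hδa)] with l hl
    refine hl.trans_le ?_
    rw [mul_div_assoc', sub_div' (integral_exp_mul_cos_mul_pos hp hpos l).ne',
      div_le_div_iff_of_pos_right (integral_exp_mul_cos_mul_pos hp hpos l)]
    exact cos_mul_integral_sub_le_integral_cos_mul hp hpos l hδ.le hδπ.le
  · exact ((div_le_one (integral_exp_mul_cos_mul_pos hp hpos l)).2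
      (integral_cos_mul_exp_mul_cos_mul_le hp hpos l)).trans_lt ha

end ExpCosWeight

theorem lambda_tendsto_one_general (d : ℕ) (lam : ℝ → ℝ)
    (hlam : ∀ l : ℝ, lam l =
      (∫ θ in (0:ℝ)..Real.pi, Real.cos θ * Real.exp (l * Real.cos θ) * Real.sin θ ^ (d - 2)) /
      (∫ θ in (0:ℝ)..Real.pi, Real.exp (l * Real.cos θ) * Real.sin θ ^ (d - 2))) :
    Filter.Tendsto lam Filter.atTop (nhds 1) := by
  rw [show lam = _ from funext hlam]
  exact tendsto_integral_cos_mul_exp_mul_cos_mul_div (p := fun θ => sin θ ^ (d - 2))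
    ((continuous_sin.pow _).intervalIntegrable _ _)
    fun θ hθ => pow_pos (sin_pos_of_pos_of_lt_pi hθ.1 hθ.2) _

/-- `λ(l) → 1` as `l → +∞`. -/
theorem lambda_tendsto_one (d : ℕ) (hd : 2 ≤ d) (lam : ℝ → ℝ)
    (hlam : ∀ l : ℝ, lam l =
      (∫ θ in (0:ℝ)..Real.pi, Real.cos θ * Real.exp (l * Real.cos θ) * Real.sin θ ^ (d - 2)) /
      (∫ θ in (0:ℝ)..Real.pi, Real.exp (l * Real.cos θ) * Real.sin θ ^ (d - 2))) :
    Filter.Tendsto lam Filter.atTop (nhds 1) :=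
  lambda_tendsto_one_general d lam hlam
end

section
/- If σ/r² ≥ 1/d, then the only solution l ∈ ℝ₊ of the equation λ(l) = (σ/r²) l is l = 0; if 0 < σ/r² < 1/d, then there exists exactly one l > 0 with λ(l) = (σ/r²) l. -/
/-!
Write `d = n + 2` and `M_g(l) = ∫₀^π g(cos θ) e^{l cos θ} sin^n θ dθ`, so that `λ = M_x / M_1`
and `∂ₗ M_g = M_{x g}`. Integrating `(e^{l cos θ} sin^{n+1} θ)'` over `[0, π]` gives
`(n + 1) M_x = l M_{1 - x²}`, hence for `l > 0` the equation `λ(l) = c l` becomes `ψ_a(l) = 0`,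
where `ψ_a = M_{a - x²}` and `a = 1 - c (n + 1)`.

For `a = b²` one has `ψ'' - b² ψ = -M_{(b² - x²)²} < 0`. Factoring `∂² - b² = (∂ - b)(∂ + b)`,
`e^{-bl} (ψ' + b ψ)` is strictly decreasing, and so is `e^{bl} (ψ' - b ψ)`. At `a = 1/d` the
Wallis formula and parity give `ψ(0) = ψ'(0) = 0`, which forces `ψ < 0` on `(0, ∞)`; so there is
no positive root when `a ≤ 1/d`. For `1/d < a < 1`, `ψ(0) > 0` while `ψ(l) < 0` for large `l`
(the mass of `e^{l cos θ}` concentrates where `cos² θ > a`), so a root exists, and it is unique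
because the sign of `(e^{bl} ψ)' = e^{bl} (ψ' + b ψ)` changes at most once.
-/

open Real Set Filter Topology intervalIntegral

/-- `e^{l cos θ} sin^n θ dθ` is the unnormalised law of the polar angle of the von Mises–Fisher
distribution on `S^{n+1}` with concentration `l`;
thus `λ = vmfIntegral (d - 2) id / vmfIntegral (d - 2) 1`. -/
noncomputable def vmfIntegral (n : ℕ) (g : ℝ → ℝ) (l : ℝ) : ℝ :=
  ∫ θ in (0:ℝ)..π, g (cos θ) * exp (l * cos θ) * sin θ ^ n

section vmfIntegral

variable {n : ℕ} {f g : ℝ → ℝ} {l : ℝ}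

lemma intervalIntegrable_vmfIntegrand (hg : Continuous g) (n : ℕ) (l a b : ℝ) :
    IntervalIntegrable (fun θ => g (cos θ) * exp (l * cos θ) * sin θ ^ n)
      MeasureTheory.volume a b :=
  (by fun_prop : Continuous fun θ => g (cos θ) * exp (l * cos θ) * sin θ ^ n).intervalIntegrable a b

lemma vmfIntegral_const_mul (c : ℝ) :
    vmfIntegral n (fun x => c * g x) l = c * vmfIntegral n g l := by
  simp only [vmfIntegral, ← integral_const_mul, mul_assoc]

lemma vmfIntegral_sub (hf : Continuous f) (hg : Continuous g) :
    vmfIntegral n (fun x => f x - g x) l = vmfIntegral n f l - vmfIntegral n g l := by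
  simp only [vmfIntegral, sub_mul]
  exact integral_sub (intervalIntegrable_vmfIntegrand hf n l 0 π)
    (intervalIntegrable_vmfIntegrand hg n l 0 π)

lemma vmfIntegral_mono (hf : Continuous f) (hg : Continuous g)
    (hfg : ∀ x ∈ Icc (-1) 1, f x ≤ g x) : vmfIntegral n f l ≤ vmfIntegral n g l := by
  refine integral_mono_on pi_pos.le (intervalIntegrable_vmfIntegrand hf n l 0 π)
    (intervalIntegrable_vmfIntegrand hg n l 0 π) fun θ hθ => ?_
  have hsin : 0 ≤ sin θ := sin_nonneg_of_nonneg_of_le_pi hθ.1 hθ.2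
  gcongr
  exact hfg _ ⟨neg_one_le_cos θ, cos_le_one θ⟩

lemma vmfIntegral_lt_vmfIntegral (hf : Continuous f) (hg : Continuous g)
    (hfg : ∀ x ∈ Icc (-1) 1, f x ≤ g x) {x₀ : ℝ} (hx₀ : x₀ ∈ Ioo (-1) 1) (hlt : f x₀ < g x₀) :
    vmfIntegral n f l < vmfIntegral n g l := by
  refine integral_lt_integral_of_continuousOn_of_le_of_exists_lt pi_pos
    (by fun_prop) (by fun_prop) (fun θ hθ => ?_) ⟨arccos x₀, ⟨arccos_nonneg _, arccos_le_pi _⟩, ?_⟩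
  · have hsin : 0 ≤ sin θ := sin_nonneg_of_nonneg_of_le_pi hθ.1.le hθ.2
    gcongr
    exact hfg _ ⟨neg_one_le_cos θ, cos_le_one θ⟩
  · have hsin : 0 < sin (arccos x₀) := by
      rw [sin_arccos]; exact sqrt_pos.2 (by nlinarith [hx₀.1, hx₀.2])
    rw [cos_arccos hx₀.1.le hx₀.2.le]
    gcongr

lemma vmfIntegral_one_pos : 0 < vmfIntegral n (fun _ => 1) l := by
  have h := vmfIntegral_lt_vmfIntegral (n := n) (l := l) continuous_const continuous_const
    (fun _ _ => zero_le_one) (x₀ := 0) (by norm_num) zero_lt_one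
  simpa [vmfIntegral] using h

lemma hasDerivAt_vmfIntegral (hg : Continuous g) (n : ℕ) (l : ℝ) :
    HasDerivAt (vmfIntegral n g) (vmfIntegral n (fun x => x * g x) l) l := by
  obtain ⟨C, hC⟩ := isCompact_Icc.exists_bound_of_continuousOn (hg.continuousOn (s := Icc (-1) 1))
  have hbound : ∀ θ, ∀ x ∈ Metric.ball l 1,
      ‖cos θ * g (cos θ) * exp (x * cos θ) * sin θ ^ n‖ ≤ C * exp (|l| + 1) := by
    intro θ x hx
    have hx' : |x| ≤ |l| + 1 := by
      have := abs_sub_abs_le_abs_sub x l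
      rw [Metric.mem_ball, Real.dist_eq] at hx
      linarith
    have hexp : exp (x * cos θ) ≤ exp (|l| + 1) := by
      gcongr
      calc x * cos θ ≤ |x| * |cos θ| := by rw [← abs_mul]; exact le_abs_self _
        _ ≤ (|l| + 1) * 1 := mul_le_mul hx' (abs_cos_le_one θ) (abs_nonneg _) (by positivity)
        _ = |l| + 1 := mul_one _
    have hg' : ‖g (cos θ)‖ ≤ C := hC _ ⟨neg_one_le_cos θ, cos_le_one θ⟩
    have hC0 : 0 ≤ C := (norm_nonneg _).trans hg'
    have hcos : ‖cos θ‖ ≤ 1 := abs_cos_le_one θ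
    have hsin : ‖sin θ‖ ≤ 1 := abs_sin_le_one θ
    rw [norm_mul, norm_mul, norm_mul, norm_pow, norm_of_nonneg (exp_pos _).le]
    calc ‖cos θ‖ * ‖g (cos θ)‖ * exp (x * cos θ) * ‖sin θ‖ ^ n
        ≤ 1 * C * exp (|l| + 1) * 1 ^ n := by gcongr
      _ = C * exp (|l| + 1) := by ring
  have hderiv : ∀ θ, ∀ x ∈ Metric.ball l 1, HasDerivAt
      (fun x => g (cos θ) * exp (x * cos θ) * sin θ ^ n)
      (cos θ * g (cos θ) * exp (x * cos θ) * sin θ ^ n) x := by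
    intro θ x _
    refine ((((hasDerivAt_mul_const (cos θ)).exp.const_mul (g (cos θ))).mul_const
      (sin θ ^ n)).congr_deriv ?_)
    ring
  exact (hasDerivAt_integral_of_dominated_loc_of_deriv_le (Metric.ball_mem_nhds l one_pos)
    (Eventually.of_forall fun x => (intervalIntegrable_vmfIntegrand hg n x 0 π).def'.1)
    (intervalIntegrable_vmfIntegrand hg n l 0 π)
    (intervalIntegrable_vmfIntegrand (g := fun x => x * g x) (by fun_prop) n l 0 π).def'.1
    (Eventually.of_forall fun θ _ => hbound θ) intervalIntegrable_const
    (Eventually.of_forall fun θ _ => hderiv θ)).2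

lemma vmfIntegral_zero_of_odd (hg : ∀ x, g (-x) = -g x) : vmfIntegral n g 0 = 0 := by
  simp only [vmfIntegral, zero_mul, exp_zero, mul_one]
  have hrefl := integral_comp_sub_left (a := 0) (b := π) (fun θ => g (cos θ) * sin θ ^ n) π
  simp only [sub_zero, sub_self, cos_pi_sub, sin_pi_sub, hg, neg_mul, integral_neg] at hrefl
  linarith

lemma vmfIntegral_sub_sq_zero (a : ℝ) :
    vmfIntegral n (fun x => a - x ^ 2) 0 = (a - 1 / (n + 2)) * vmfIntegral n (fun _ => 1) 0 := by
  have hwallis : ∫ θ in (0:ℝ)..π, sin θ ^ (n + 2)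
      = (n + 1) / (n + 2) * ∫ θ in (0:ℝ)..π, sin θ ^ n := by
    simp [integral_sin_pow]
  have hcos : ∀ θ, (a - cos θ ^ 2) * sin θ ^ n = (a - 1) * sin θ ^ n + sin θ ^ (n + 2) := by
    intro θ; rw [cos_sq']; ring
  simp only [vmfIntegral, zero_mul, exp_zero, mul_one, one_mul, hcos]
  rw [integral_add ((by fun_prop : Continuous fun θ => (a - 1) * sin θ ^ n).intervalIntegrable _ _)
    ((by fun_prop : Continuous fun θ => sin θ ^ (n + 2)).intervalIntegrable _ _),
    integral_const_mul, hwallis]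
  field_simp
  ring

lemma nat_succ_mul_vmfIntegral_id :
    (n + 1) * vmfIntegral n (fun x => x) l = l * vmfIntegral n (fun x => 1 - x ^ 2) l := by
  have hderiv : ∀ θ ∈ uIcc 0 π, HasDerivAt (fun t => exp (l * cos t) * sin t ^ (n + 1))
      ((n + 1) * (cos θ * exp (l * cos θ) * sin θ ^ n)
        - l * ((1 - cos θ ^ 2) * exp (l * cos θ) * sin θ ^ n)) θ := by
    intro θ _
    refine (((hasDerivAt_cos θ).const_mul l).exp.mul
      ((hasDerivAt_sin θ).pow (n + 1))).congr_deriv ?_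
    simp only [Pi.pow_apply, cos_sq']
    push_cast
    ring
  have hftc :=
    integral_eq_sub_of_hasDerivAt hderiv (Continuous.intervalIntegrable (by fun_prop) _ _)
  simp only [sin_pi, sin_zero, ne_eq, Nat.add_one_ne_zero, not_false_eq_true, zero_pow, mul_zero,
    sub_zero] at hftc
  rw [integral_sub (Continuous.intervalIntegrable (by fun_prop) _ _)
    (Continuous.intervalIntegrable (by fun_prop) _ _),
    integral_const_mul, integral_const_mul, sub_eq_zero] at hftc
  exact hftc

end vmfIntegral

structure StrictSupersolution (b : ℝ) (y y' y'' : ℝ → ℝ) : Prop where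
  hasDerivAt : ∀ t, HasDerivAt y (y' t) t
  hasDerivAt_deriv : ∀ t, HasDerivAt y' (y'' t) t
  lt : ∀ t, y'' t < b ^ 2 * y t

namespace StrictSupersolution

variable {b : ℝ} {y y' y'' : ℝ → ℝ}

lemma continuous (h : StrictSupersolution b y y' y'') : Continuous y :=
  continuous_iff_continuousAt.2 fun t => (h.hasDerivAt t).continuousAt

lemma neg (h : StrictSupersolution b y y' y'') : StrictSupersolution (-b) y y' y'' :=
  ⟨h.hasDerivAt, h.hasDerivAt_deriv, by simpa only [neg_sq] using h.lt⟩

lemma hasDerivAt_exp_mul (h : StrictSupersolution b y y' y'') (c t : ℝ) :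
    HasDerivAt (fun s => exp (c * s) * y s) (exp (c * t) * (y' t + c * y t)) t :=
  (((hasDerivAt_id' t).const_mul c).exp.mul (h.hasDerivAt t)).congr_deriv (by ring)

lemma strictAnti_exp_mul_deriv_add (h : StrictSupersolution b y y' y'') :
    StrictAnti fun t => exp (-b * t) * (y' t + b * y t) := by
  have hd : ∀ t, HasDerivAt (fun t => exp (-b * t) * (y' t + b * y t))
      (exp (-b * t) * (y'' t - b ^ 2 * y t)) t := fun t =>
    (((hasDerivAt_id' t).const_mul (-b)).exp.mul
      ((h.hasDerivAt_deriv t).add ((h.hasDerivAt t).const_mul b))).congr_deriv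
        (by simp only [Pi.add_apply]; ring)
  exact strictAnti_of_deriv_neg fun t =>
    (hd t).deriv ▸ mul_neg_of_pos_of_neg (exp_pos _) (sub_neg.2 (h.lt t))

lemma neg_of_eq_zero (h : StrictSupersolution b y y' y'') (h0 : y 0 = 0) (h0' : y' 0 = 0)
    {t : ℝ} (ht : 0 < t) : y t < 0 := by
  have hderiv_neg : ∀ s, 0 < s → y' s + -b * y s < 0 := fun s hs => by
    have := h.neg.strictAnti_exp_mul_deriv_add hs
    simp only [neg_neg, mul_zero, exp_zero, h0, h0', add_zero] at this
    exact neg_of_mul_neg_right this (exp_pos _).le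
  have hanti : StrictAntiOn (fun s => exp (-b * s) * y s) (Ici 0) :=
    strictAntiOn_of_deriv_neg (convex_Ici 0)
      (fun s _ => (h.hasDerivAt_exp_mul (-b) s).continuousAt.continuousWithinAt) fun s hs => by
        rw [interior_Ici] at hs
        rw [(h.hasDerivAt_exp_mul (-b) s).deriv]
        exact mul_neg_of_pos_of_neg (exp_pos _) (hderiv_neg s hs)
  have := hanti self_mem_Ici ht.le ht
  simp only [mul_zero, exp_zero, h0] at this
  exact neg_of_mul_neg_right this (exp_pos _).le

lemma subsingleton_pos_zeros (h : StrictSupersolution b y y' y'') (h0 : 0 < y 0) :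
    {t | 0 < t ∧ y t = 0}.Subsingleton := by
  have hcont : Continuous fun s => exp (b * s) * y s :=
    continuous_iff_continuousAt.2 fun s => (h.hasDerivAt_exp_mul b s).continuousAt
  have hz := h.strictAnti_exp_mul_deriv_add
  have two_zeros : ∀ p q, 0 < p → y p = 0 → y q = 0 → p < q → False := by
    intro p q hp hyp hyq hpq
    rcases le_or_gt (y' p + b * y p) 0 with hw | hw
    · have hanti : StrictAntiOn (fun s => exp (b * s) * y s) (Icc p q) :=
        strictAntiOn_of_deriv_neg (convex_Icc p q) hcont.continuousOn fun s hs => by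
          rw [interior_Icc] at hs
          rw [(h.hasDerivAt_exp_mul b s).deriv]
          have hzs := (hz hs.1).trans_le (mul_nonpos_of_nonneg_of_nonpos (exp_pos _).le hw)
          exact mul_neg_of_pos_of_neg (exp_pos _) (neg_of_mul_neg_right hzs (exp_pos _).le)
      have := hanti (left_mem_Icc.2 hpq.le) (right_mem_Icc.2 hpq.le) hpq
      simp [hyp, hyq] at this
    · have hmono : StrictMonoOn (fun s => exp (b * s) * y s) (Icc 0 p) :=
        strictMonoOn_of_deriv_pos (convex_Icc 0 p) hcont.continuousOn fun s hs => by
          rw [interior_Icc] at hs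
          rw [(h.hasDerivAt_exp_mul b s).deriv]
          have hzs := (mul_pos (exp_pos _) hw).trans (hz hs.2)
          exact mul_pos (exp_pos _) (pos_of_mul_pos_right hzs (exp_pos _).le)
      have := hmono (left_mem_Icc.2 hp.le) (right_mem_Icc.2 hp.le) hp
      simp only [mul_zero, exp_zero, one_mul, hyp] at this
      linarith
  intro p hp q hq
  rcases lt_trichotomy p q with hpq | rfl | hqp
  · exact (two_zeros p q hp.1 hp.2 hq.2 hpq).elim
  · rfl
  · exact (two_zeros q p hq.1 hq.2 hp.2 hqp).elim

end StrictSupersolution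

section sub_sq

variable {n : ℕ}

lemma strictSupersolution_vmfIntegral_sub_sq (n : ℕ) {b : ℝ} (hb : b ≠ 0) :
    StrictSupersolution b (vmfIntegral n fun x => b ^ 2 - x ^ 2)
      (vmfIntegral n fun x => x * (b ^ 2 - x ^ 2))
      (vmfIntegral n fun x => x * (x * (b ^ 2 - x ^ 2))) where
  hasDerivAt t := hasDerivAt_vmfIntegral (by fun_prop) n t
  hasDerivAt_deriv t := hasDerivAt_vmfIntegral (by fun_prop) n t
  lt t := by
    rw [← vmfIntegral_const_mul]
    exact vmfIntegral_lt_vmfIntegral (by fun_prop) (by fun_prop)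
      (fun x _ => by nlinarith [sq_nonneg (b ^ 2 - x ^ 2)]) (x₀ := 0) (by norm_num)
      (by norm_num; positivity)

lemma vmfIntegral_sub_sq_neg {a l : ℝ} (ha : a ≤ 1 / (n + 2)) (hl : 0 < l) :
    vmfIntegral n (fun x => a - x ^ 2) l < 0 := by
  have hb2 : sqrt (1 / (n + 2)) ^ 2 = 1 / (n + 2) := sq_sqrt (by positivity)
  have h := strictSupersolution_vmfIntegral_sub_sq n
    (sqrt_pos.2 (by positivity : (0:ℝ) < 1 / (n + 2))).ne'
  have hneg := h.neg_of_eq_zero (by rw [vmfIntegral_sub_sq_zero, hb2, sub_self, zero_mul])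
    (vmfIntegral_zero_of_odd fun x => by ring) hl
  rw [hb2] at hneg
  exact (vmfIntegral_mono (by fun_prop) (by fun_prop) fun x _ => by linarith).trans_lt hneg

lemma sub_sq_mul_exp_le {b l : ℝ} (hb : 0 ≤ b) (hl : 0 ≤ l) (x : ℝ) :
    (b ^ 2 - x ^ 2) * exp (l * x) ≤ b ^ 2 * exp (l * b) := by
  rcases le_total (x ^ 2) (b ^ 2) with hx | hx
  · have hexp : exp (l * x) ≤ exp (l * b) := by
      gcongr
      exact (abs_le_of_sq_le_sq' hx hb).2
    have hsq : 0 ≤ b ^ 2 - x ^ 2 := sub_nonneg.2 hx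
    gcongr
    linarith [sq_nonneg x]
  · exact (mul_nonpos_of_nonpos_of_nonneg (sub_nonpos.2 hx) (exp_pos _).le).trans (by positivity)

lemma vmfIntegral_sub_sq_le {b l θ₀ : ℝ} (hb : 0 ≤ b) (hl : 0 ≤ l) (hθ₀ : θ₀ ∈ Icc 0 π)
    (hbθ₀ : b ≤ cos θ₀) :
    vmfIntegral n (fun x => b ^ 2 - x ^ 2) l ≤
      (b ^ 2 - cos θ₀ ^ 2) * exp (l * cos θ₀) * (∫ θ in (0:ℝ)..θ₀, sin θ ^ n)
        + b ^ 2 * exp (l * b) * ∫ θ in θ₀..π, sin θ ^ n := by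
  have hint := intervalIntegrable_vmfIntegrand (g := fun x => b ^ 2 - x ^ 2) (by fun_prop) n l
  have hsin_int : ∀ a c : ℝ, IntervalIntegrable (fun θ => sin θ ^ n) MeasureTheory.volume a c :=
    (by fun_prop : Continuous fun θ => sin θ ^ n).intervalIntegrable
  rw [vmfIntegral, ← integral_add_adjacent_intervals (hint 0 θ₀) (hint θ₀ π),
    ← integral_const_mul, ← integral_const_mul]
  refine add_le_add
    (integral_mono_on hθ₀.1 (hint 0 θ₀) ((hsin_int 0 θ₀).const_mul _) fun θ hθ => ?_)
    (integral_mono_on hθ₀.2 (hint θ₀ π) ((hsin_int θ₀ π).const_mul _) fun θ hθ => ?_)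
  · have hcos : cos θ₀ ≤ cos θ := cos_le_cos_of_nonneg_of_le_pi hθ.1 hθ₀.2 hθ.2
    have hsin : 0 ≤ sin θ := sin_nonneg_of_nonneg_of_le_pi hθ.1 (hθ.2.trans hθ₀.2)
    have hgap : b ^ 2 - cos θ ^ 2 ≤ b ^ 2 - cos θ₀ ^ 2 := by nlinarith
    have hgap' : b ^ 2 - cos θ₀ ^ 2 ≤ 0 := by nlinarith
    have hexp : exp (l * cos θ₀) ≤ exp (l * cos θ) := by gcongr
    calc (b ^ 2 - cos θ ^ 2) * exp (l * cos θ) * sin θ ^ n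
        ≤ (b ^ 2 - cos θ₀ ^ 2) * exp (l * cos θ) * sin θ ^ n := by gcongr
      _ ≤ (b ^ 2 - cos θ₀ ^ 2) * exp (l * cos θ₀) * sin θ ^ n := by
        gcongr ?_ * _
        exact mul_le_mul_of_nonpos_left hexp hgap'
  · have hsin : 0 ≤ sin θ := sin_nonneg_of_nonneg_of_le_pi (hθ₀.1.trans hθ.1) hθ.2
    exact mul_le_mul_of_nonneg_right (sub_sq_mul_exp_le hb hl _) (by positivity)

lemma exists_pos_vmfIntegral_sub_sq_neg {b : ℝ} (hb0 : 0 ≤ b) (hb1 : b < 1) :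
    ∃ l > 0, vmfIntegral n (fun x => b ^ 2 - x ^ 2) l < 0 := by
  obtain ⟨γ, hbγ, hγ1⟩ := exists_between hb1
  have hcos : cos (arccos γ) = γ := cos_arccos (by linarith) hγ1.le
  set m₁ := ∫ θ in (0:ℝ)..arccos γ, sin θ ^ n
  set m₂ := ∫ θ in arccos γ..π, sin θ ^ n
  have hm₁ : 0 < m₁ := intervalIntegral_pos_of_pos_on
    ((by fun_prop : Continuous fun θ => sin θ ^ n).intervalIntegrable _ _)
    (fun θ hθ => pow_pos (sin_pos_of_pos_of_lt_pi hθ.1 (hθ.2.trans_le (arccos_le_pi γ))) n)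
    (arccos_pos.2 hγ1)
  have hgap : 0 < (γ ^ 2 - b ^ 2) * m₁ := mul_pos (by nlinarith) hm₁
  have hlim : Tendsto (fun l => b ^ 2 * m₂ * exp (-((γ - b) * l))) atTop (𝓝 0) := by
    simpa using (tendsto_exp_neg_atTop_nhds_zero.comp
      (tendsto_id.const_mul_atTop (sub_pos.2 hbγ))).const_mul (b ^ 2 * m₂)
  obtain ⟨L, hL, hL0⟩ := ((hlim.eventually (gt_mem_nhds hgap)).and (eventually_gt_atTop 0)).exists
  refine ⟨L, hL0, (vmfIntegral_sub_sq_le hb0 hL0.le ⟨arccos_nonneg γ, arccos_le_pi γ⟩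
    (by rw [hcos]; exact hbγ.le)).trans_lt ?_⟩
  have hsplit : exp (L * b) = exp (L * γ) * exp (-((γ - b) * L)) := by rw [← exp_add]; ring_nf
  rw [hcos, hsplit]
  have := mul_pos (exp_pos (L * γ)) (sub_pos.2 hL)
  linarith

lemma existsUnique_pos_vmfIntegral_sub_sq_eq_zero {a : ℝ} (ha : 1 / (n + 2) < a) (ha1 : a < 1) :
    ∃! l, 0 < l ∧ vmfIntegral n (fun x => a - x ^ 2) l = 0 := by
  obtain ⟨b, hb0, rfl⟩ : ∃ b, 0 < b ∧ a = b ^ 2 :=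
    ⟨sqrt a, sqrt_pos.2 ((by positivity : (0:ℝ) < 1 / (n + 2)).trans ha), (sq_sqrt (by
      linarith [(by positivity : (0:ℝ) < 1 / (n + 2))])).symm⟩
  have hb1 : b < 1 := by nlinarith
  have h := strictSupersolution_vmfIntegral_sub_sq n hb0.ne'
  have hy0 : 0 < vmfIntegral n (fun x => b ^ 2 - x ^ 2) 0 := by
    rw [vmfIntegral_sub_sq_zero]
    exact mul_pos (sub_pos.2 ha) vmfIntegral_one_pos
  obtain ⟨L, hL0, hL⟩ := exists_pos_vmfIntegral_sub_sq_neg (n := n) hb0.le hb1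
  obtain ⟨l, hl, hroot⟩ := intermediate_value_Ioo' hL0.le h.continuous.continuousOn ⟨hL, hy0⟩
  exact ⟨l, ⟨hl.1, hroot⟩, fun l' hl' => h.subsingleton_pos_zeros hy0 hl' ⟨hl.1, hroot⟩⟩

lemma vmfIntegral_id_div_eq_mul_iff {c l : ℝ} (hl : l ≠ 0) :
    vmfIntegral n (fun x => x) l / vmfIntegral n (fun _ => 1) l = c * l ↔
      vmfIntegral n (fun x => 1 - c * (n + 1) - x ^ 2) l = 0 := by
  have hexpand : vmfIntegral n (fun x => 1 - c * (n + 1) - x ^ 2) l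
      = vmfIntegral n (fun x => 1 - x ^ 2) l - c * (n + 1) * vmfIntegral n (fun _ => 1) l := by
    rw [← vmfIntegral_const_mul, ← vmfIntegral_sub (by fun_prop) (by fun_prop)]
    congr 1
    funext x
    ring
  have hibp := nat_succ_mul_vmfIntegral_id (n := n) (l := l)
  rw [div_eq_iff vmfIntegral_one_pos.ne', hexpand]
  constructor
  · intro h
    exact mul_left_cancel₀ hl (by linear_combination (↑n + 1) * h - hibp)
  · intro h
    exact mul_left_cancel₀ (by positivity : (n + 1 : ℝ) ≠ 0) (by linear_combination hibp + l * h)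

end sub_sq

/-- If `σ/r² ≥ 1/d` the only solution `l ≥ 0` of `λ(l) = (σ/r²) l` is `l = 0`;
if `0 < σ/r² < 1/d` there is exactly one `l > 0` with `λ(l) = (σ/r²) l`. -/
theorem lambda_fixed_points (d : ℕ) (hd : 2 ≤ d) (σ r : ℝ) (hσ : 0 < σ) (hr : 0 < r)
    (lam : ℝ → ℝ)
    (hlam : ∀ l : ℝ, lam l =
      (∫ θ in (0:ℝ)..Real.pi, Real.cos θ * Real.exp (l * Real.cos θ) * Real.sin θ ^ (d - 2)) /
      (∫ θ in (0:ℝ)..Real.pi, Real.exp (l * Real.cos θ) * Real.sin θ ^ (d - 2))) :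
    (σ / r ^ 2 ≥ 1 / (d : ℝ) →
      ∀ l : ℝ, 0 ≤ l → lam l = σ / r ^ 2 * l → l = 0) ∧
    (σ / r ^ 2 < 1 / (d : ℝ) →
      ∃! l : ℝ, 0 < l ∧ lam l = σ / r ^ 2 * l) := by
  obtain ⟨n, rfl⟩ : ∃ n, d = n + 2 := ⟨d - 2, by omega⟩
  have hlam' : ∀ l, lam l = vmfIntegral n (fun x => x) l / vmfIntegral n (fun _ => 1) l := by
    simpa [vmfIntegral] using hlam
  set c := σ / r ^ 2
  have hc : 0 < c := by positivity
  have hfixed : ∀ l, 0 < l →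
      (lam l = c * l ↔ vmfIntegral n (fun x => 1 - c * (n + 1) - x ^ 2) l = 0) :=
    fun l hl => hlam' l ▸ vmfIntegral_id_div_eq_mul_iff hl.ne'
  push_cast
  refine ⟨fun hge l hl0 hl => ?_, fun hlt => ?_⟩
  · have ha : 1 - c * (n + 1) ≤ 1 / (n + 2) := by
      rw [ge_iff_le, div_le_iff₀ (by positivity)] at hge
      rw [le_div_iff₀ (by positivity)]
      nlinarith
    rcases hl0.eq_or_lt with rfl | hpos
    · rfl
    · exact absurd ((hfixed l hpos).1 hl) (vmfIntegral_sub_sq_neg ha hpos).ne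
  · have ha : 1 / (n + 2) < 1 - c * (n + 1) := by
      rw [lt_div_iff₀ (by positivity)] at hlt
      rw [div_lt_iff₀ (by positivity)]
      nlinarith
    obtain ⟨l, ⟨hl, hroot⟩, huniq⟩ :=
      existsUnique_pos_vmfIntegral_sub_sq_eq_zero ha (by nlinarith : 1 - c * (n + 1) < 1)
    exact ⟨l, ⟨hl, (hfixed l hl).2 hroot⟩,
      fun l' hl' => huniq l' ⟨hl'.1, (hfixed l' hl'.1).1 hl'.2⟩⟩
end

section
/- For every l > 0, μ(l) < λ(l), where μ(l) = 2l/(√(d² + 4l²) + d) and λ(l) = (∫₀^π cos θ e^{l cos θ} sin^{d-2} θ dθ)/(∫₀^π e^{l cos θ} sin^{d-2} θ dθ). -/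
/-!
Let `w(θ) = e^{l cos θ} sin^{d-2} θ` on `[0, π]` and write `E` for the `w`-weighted mean, so that
`λ = E[cos]`. Since `μ` is the positive root of `l x² + d x - l`, it suffices that
`l < l λ² + d λ`. Integrating by parts against `w` (the boundary terms carry a factor `sin^{d-1}`)
gives `l E[sin²] = (d - 1) E[cos]` and `E[sin²] + l E[cos sin²] = (d - 1) E[cos²]`; with
`E[sin²] + E[cos²] = 1` the claim becomes the covariance inequality `E[cos sin²] < E[cos] E[sin²]`.
Folding `[0, π]` onto `[0, π/2]` via `θ ↦ π - θ` turns this into Chebyshev's integral inequality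
for the decreasing `cos θ tanh (l cos θ)` and the increasing `sin² θ`.
-/

open Real intervalIntegral Set

section Chebyshev

variable {a b : ℝ} {u v ρ : ℝ → ℝ}

lemma intervalIntegral_neg_of_neg_on {f : ℝ → ℝ}
    (hf : IntervalIntegrable f MeasureTheory.volume a b) (hneg : ∀ x ∈ Ioo a b, f x < 0)
    (hab : a < b) : ∫ x in a..b, f x < 0 := by
  have := intervalIntegral_pos_of_pos_on hf.neg (fun x hx => neg_pos.2 (hneg x hx)) hab
  rw [← neg_pos, ← integral_neg]
  exact this

lemma integral_linear_combination_mul (hu : Continuous u) (hv : Continuous v) (hρ : Continuous ρ)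
    (α β γ δ : ℝ) :
    ∫ x in a..b, (α + β * u x + γ * v x + δ * (u x * v x)) * ρ x =
      α * (∫ x in a..b, ρ x) + β * (∫ x in a..b, u x * ρ x) + γ * (∫ x in a..b, v x * ρ x) +
        δ * ∫ x in a..b, u x * v x * ρ x := by
  simp only [add_mul, mul_assoc]
  rw [integral_add, integral_add, integral_add, integral_const_mul, integral_const_mul,
    integral_const_mul, integral_const_mul]
  all_goals exact Continuous.intervalIntegrable (by fun_prop) _ _

lemma integral_sub_mul_sub_mul_neg (hu : Continuous u) (hv : Continuous v) (hρ : Continuous ρ)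
    (hρ_pos : ∀ x ∈ Ioo a b, 0 < ρ x) (hu_anti : StrictAntiOn u (Ioo a b))
    (hv_mono : StrictMonoOn v (Ioo a b)) {y : ℝ} (hy : y ∈ Ioo a b) :
    ∫ x in a..b, (u x - u y) * (v x - v y) * ρ x < 0 := by
  have hi : ∀ c d, IntervalIntegrable (fun x => (u x - u y) * (v x - v y) * ρ x)
      MeasureTheory.volume c d := fun c d => Continuous.intervalIntegrable (by fun_prop) c d
  have neg_on : ∀ x ∈ Ioo a b, x ≠ y → (u x - u y) * (v x - v y) * ρ x < 0 := by
    intro x hx hxy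
    refine mul_neg_of_neg_of_pos ?_ (hρ_pos x hx)
    rcases hxy.lt_or_gt with h | h
    · exact mul_neg_of_pos_of_neg (sub_pos.2 (hu_anti hx hy h)) (sub_neg.2 (hv_mono hx hy h))
    · exact mul_neg_of_neg_of_pos (sub_neg.2 (hu_anti hy hx h)) (sub_pos.2 (hv_mono hy hx h))
  rw [← integral_add_adjacent_intervals (hi a y) (hi y b)]
  refine add_neg (intervalIntegral_neg_of_neg_on (hi a y) (fun x hx => ?_) hy.1)
    (intervalIntegral_neg_of_neg_on (hi y b) (fun x hx => ?_) hy.2)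
  · exact neg_on x ⟨hx.1, hx.2.trans hy.2⟩ hx.2.ne
  · exact neg_on x ⟨hy.1.trans hx.1, hx.2⟩ hx.1.ne'

theorem integral_mul_mul_integral_lt_of_strictAntiOn_of_strictMonoOn (hab : a < b)
    (hu : Continuous u) (hv : Continuous v) (hρ : Continuous ρ) (hρ_pos : ∀ x ∈ Ioo a b, 0 < ρ x)
    (hu_anti : StrictAntiOn u (Ioo a b)) (hv_mono : StrictMonoOn v (Ioo a b)) :
    (∫ x in a..b, u x * v x * ρ x) * (∫ x in a..b, ρ x) <
      (∫ x in a..b, u x * ρ x) * (∫ x in a..b, v x * ρ x) := by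
  set I := ∫ x in a..b, ρ x
  set Iu := ∫ x in a..b, u x * ρ x
  set Iv := ∫ x in a..b, v x * ρ x
  set Iuv := ∫ x in a..b, u x * v x * ρ x
  have inner (y : ℝ) : ∫ x in a..b, (u x - u y) * (v x - v y) * ρ x =
      u y * v y * I + -v y * Iu + -u y * Iv + 1 * Iuv := by
    rw [← integral_linear_combination_mul hu hv hρ]
    congr 1; ext x; ring
  have outer : ∫ y in a..b, (u y * v y * I + -v y * Iu + -u y * Iv + 1 * Iuv) * ρ y =
      2 * (Iuv * I - Iu * Iv) := by
    rw [show (fun y => (u y * v y * I + -v y * Iu + -u y * Iv + 1 * Iuv) * ρ y) =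
        fun y => (Iuv + -Iv * u y + -Iu * v y + I * (u y * v y)) * ρ y by ext y; ring,
      integral_linear_combination_mul hu hv hρ]
    ring
  have : ∫ y in a..b, (u y * v y * I + -v y * Iu + -u y * Iv + 1 * Iuv) * ρ y < 0 := by
    refine intervalIntegral_neg_of_neg_on (Continuous.intervalIntegrable (by fun_prop) _ _)
      (fun y hy => ?_) hab
    rw [← inner]
    exact mul_neg_of_neg_of_pos
      (integral_sub_mul_sub_mul_neg hu hv hρ hρ_pos hu_anti hv_mono hy) (hρ_pos y hy)
  linarith

end Chebyshev

lemma integral_eq_integral_add_comp_sub {f : ℝ → ℝ} (hf : Continuous f) (a b : ℝ) :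
    ∫ x in a..b, f x = ∫ x in a..(a + b) / 2, (f x + f (a + b - x)) := by
  have reflect : ∫ x in a..(a + b) / 2, f (a + b - x) = ∫ x in (a + b) / 2..b, f x := by
    rw [integral_comp_sub_left]; congr 1 <;> ring
  rw [integral_add (hf.intervalIntegrable _ _) (Continuous.intervalIntegrable (by fun_prop) _ _),
    reflect, integral_add_adjacent_intervals (hf.intervalIntegrable _ _)
      (hf.intervalIntegrable _ _)]

lemma Real.tanh_strictMono : StrictMono tanh := by
  intro x y hxy
  rw [tanh_eq_sinh_div_cosh, tanh_eq_sinh_div_cosh, div_lt_div_iff₀ (cosh_pos x) (cosh_pos y)]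
  have := sinh_pos_iff.2 (sub_pos.2 hxy)
  rw [sinh_sub] at this
  linarith

@[fun_prop]
lemma Real.continuous_tanh : Continuous tanh := by
  rw [show tanh = fun x => sinh x / cosh x from funext tanh_eq_sinh_div_cosh]
  exact continuous_sinh.div continuous_cosh fun x => (cosh_pos x).ne'

lemma Real.tanh_nonneg {x : ℝ} (hx : 0 ≤ x) : 0 ≤ tanh x := by
  rw [tanh_eq_sinh_div_cosh]
  exact div_nonneg (sinh_nonneg_iff.2 hx) (cosh_pos x).le

lemma strictMonoOn_mul_tanh_mul {l : ℝ} (hl : 0 < l) :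
    StrictMonoOn (fun t => t * tanh (l * t)) (Ici 0) := by
  intro s hs t ht hst
  exact mul_lt_mul'' hst (tanh_strictMono (mul_lt_mul_of_pos_left hst hl)) hs
    (tanh_nonneg (mul_nonneg hl.le hs))

lemma two_mul_div_sqrt_add_lt {l d x : ℝ} (hl : 0 < l) (hd : 0 ≤ d) (hx : 0 < x)
    (h : l < l * x ^ 2 + d * x) : 2 * l / (√(d ^ 2 + 4 * l ^ 2) + d) < x := by
  have hr := sq_sqrt (by positivity : 0 ≤ d ^ 2 + 4 * l ^ 2)
  have hr0 := sqrt_nonneg (d ^ 2 + 4 * l ^ 2)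
  rw [div_lt_iff₀ (by positivity)]
  by_contra! hle
  have := pow_le_pow_left₀ (mul_nonneg hx.le hr0)
    (by linarith : x * √(d ^ 2 + 4 * l ^ 2) ≤ 2 * l - x * d) 2
  rw [mul_pow, hr] at this
  nlinarith [mul_lt_mul_of_pos_left h hl]

noncomputable def angularWeight (l : ℝ) (n : ℕ) (θ : ℝ) : ℝ := exp (l * cos θ) * sin θ ^ n

section angularWeight

variable (l : ℝ) (n : ℕ)

@[fun_prop]
lemma continuous_angularWeight : Continuous (angularWeight l n) := by
  unfold angularWeight; fun_prop

lemma angularWeight_pos {θ : ℝ} (hθ : θ ∈ Ioo 0 π) : 0 < angularWeight l n θ :=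
  mul_pos (exp_pos _) (pow_pos (sin_pos_of_pos_of_lt_pi hθ.1 hθ.2) n)

lemma integral_mul_angularWeight_pos {a : ℝ → ℝ} (ha : Continuous a)
    (ha_pos : ∀ θ ∈ Ioo 0 π, 0 < a θ) : 0 < ∫ θ in 0..π, a θ * angularWeight l n θ :=
  intervalIntegral_pos_of_pos_on (Continuous.intervalIntegrable (by fun_prop) _ _)
    (fun θ hθ => mul_pos (ha_pos θ hθ) (angularWeight_pos l n hθ)) pi_pos

lemma angularWeight_pi_sub (θ : ℝ) :
    angularWeight l n (π - θ) = exp (-(l * cos θ)) * sin θ ^ n := by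
  simp only [angularWeight, cos_pi_sub, sin_pi_sub, mul_neg]

lemma hasDerivAt_comp_cos_mul_sin_pow_succ_mul_exp {g g' : ℝ → ℝ} (hg : ∀ t, HasDerivAt g (g' t) t)
    (θ : ℝ) :
    HasDerivAt (fun θ => g (cos θ) * sin θ ^ (n + 1) * exp (l * cos θ))
      ((n + 1) * (g (cos θ) * cos θ * angularWeight l n θ) -
        l * (g (cos θ) * sin θ ^ 2 * angularWeight l n θ) -
          g' (cos θ) * sin θ ^ 2 * angularWeight l n θ) θ := by
  have h := (((hg (cos θ)).comp θ (hasDerivAt_cos θ)).fun_mul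
    ((hasDerivAt_sin θ).fun_pow (n + 1))).fun_mul ((hasDerivAt_cos θ).const_mul l).exp
  refine h.congr_deriv ?_
  simp only [angularWeight, Function.comp_apply, Nat.add_sub_cancel]
  push_cast
  ring

theorem integral_sin_sq_mul_angularWeight {g g' : ℝ → ℝ} (hg : ∀ t, HasDerivAt g (g' t) t)
    (hg' : Continuous g') :
    l * (∫ θ in 0..π, g (cos θ) * sin θ ^ 2 * angularWeight l n θ) +
        ∫ θ in 0..π, g' (cos θ) * sin θ ^ 2 * angularWeight l n θ =
      (n + 1) * ∫ θ in 0..π, g (cos θ) * cos θ * angularWeight l n θ := by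
  have hgc : Continuous g := continuous_iff_continuousAt.2 fun t => (hg t).continuousAt
  have hi : ∀ {f : ℝ → ℝ}, Continuous f → IntervalIntegrable f MeasureTheory.volume 0 π :=
    fun hf => hf.intervalIntegrable 0 π
  have boundary := integral_eq_sub_of_hasDerivAt
    (fun θ _ => hasDerivAt_comp_cos_mul_sin_pow_succ_mul_exp l n hg θ) (hi (by fun_prop))
  simp only [sin_pi, sin_zero, zero_pow n.succ_ne_zero, mul_zero, zero_mul, sub_zero] at boundary
  rw [integral_sub (hi (by fun_prop)) (hi (by fun_prop)),
    integral_sub (hi (by fun_prop)) (hi (by fun_prop)), integral_const_mul,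
    integral_const_mul] at boundary
  linarith

lemma angularWeight_sub_angularWeight_pi_sub (θ : ℝ) :
    angularWeight l n θ - angularWeight l n (π - θ) =
      tanh (l * cos θ) * (angularWeight l n θ + angularWeight l n (π - θ)) := by
  rw [angularWeight_pi_sub, angularWeight, tanh_eq_sinh_div_cosh, sinh_eq, cosh_eq]
  field_simp

lemma integral_mul_angularWeight_eq_fold {a : ℝ → ℝ} (ha : Continuous a)
    (ha_symm : ∀ θ, a (π - θ) = a θ) :
    ∫ θ in 0..π, a θ * angularWeight l n θ =
      ∫ θ in 0..π / 2, a θ * (angularWeight l n θ + angularWeight l n (π - θ)) := by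
  rw [integral_eq_integral_add_comp_sub (by fun_prop), zero_add]
  congr 1; ext θ
  rw [ha_symm]; ring

lemma integral_cos_mul_angularWeight_eq_fold {a : ℝ → ℝ} (ha : Continuous a)
    (ha_symm : ∀ θ, a (π - θ) = a θ) :
    ∫ θ in 0..π, cos θ * a θ * angularWeight l n θ =
      ∫ θ in 0..π / 2, cos θ * tanh (l * cos θ) * a θ *
        (angularWeight l n θ + angularWeight l n (π - θ)) := by
  rw [integral_eq_integral_add_comp_sub (by fun_prop), zero_add]
  congr 1; ext θ
  rw [ha_symm, cos_pi_sub]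
  linear_combination cos θ * a θ * angularWeight_sub_angularWeight_pi_sub l n θ

theorem integral_cos_mul_sin_sq_mul_angularWeight_lt (hl : 0 < l) :
    (∫ θ in 0..π, cos θ * sin θ ^ 2 * angularWeight l n θ) * (∫ θ in 0..π, angularWeight l n θ) <
      (∫ θ in 0..π, cos θ * angularWeight l n θ) *
        ∫ θ in 0..π, sin θ ^ 2 * angularWeight l n θ := by
  have sin_sq_symm : ∀ θ, sin (π - θ) ^ 2 = sin θ ^ 2 := fun θ => by rw [sin_pi_sub]
  have D := integral_mul_angularWeight_eq_fold l n (a := fun _ => 1) continuous_const fun _ => rfl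
  have N := integral_cos_mul_angularWeight_eq_fold l n (a := fun _ => 1) continuous_const
    fun _ => rfl
  have S := integral_mul_angularWeight_eq_fold l n (a := fun θ => sin θ ^ 2) (by fun_prop)
    sin_sq_symm
  have M := integral_cos_mul_angularWeight_eq_fold l n (a := fun θ => sin θ ^ 2) (by fun_prop)
    sin_sq_symm
  simp only [one_mul, mul_one] at D N
  rw [D, N, S, M]
  have maps_cos : MapsTo cos (Ioo 0 (π / 2)) (Ici 0) := fun θ hθ =>
    (cos_pos_of_mem_Ioo ⟨by linarith [hθ.1, pi_pos], hθ.2⟩).le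
  have maps_sin : MapsTo sin (Ioo 0 (π / 2)) (Ici 0) := fun θ hθ =>
    (sin_pos_of_pos_of_lt_pi hθ.1 (by linarith [hθ.2, pi_pos])).le
  refine integral_mul_mul_integral_lt_of_strictAntiOn_of_strictMonoOn (by positivity)
    (by fun_prop) (by fun_prop) (by fun_prop)
    (fun θ hθ => add_pos (angularWeight_pos l n ⟨hθ.1, by linarith [hθ.2, pi_pos]⟩)
      (angularWeight_pos l n ⟨by linarith [hθ.2, pi_pos], by linarith [hθ.1]⟩)) ?_ ?_
  · exact (strictMonoOn_mul_tanh_mul hl).comp_strictAntiOn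
      (strictAntiOn_cos.mono fun θ hθ => ⟨hθ.1.le, by linarith [hθ.2, pi_pos]⟩) maps_cos
  · exact (pow_left_strictMonoOn₀ two_ne_zero).comp
      (strictMonoOn_sin.mono fun θ hθ => ⟨by linarith [hθ.1, pi_pos], hθ.2.le⟩) maps_sin

-- `λ(l)` in dimension `n + 2`
noncomputable def meanCos (l : ℝ) (n : ℕ) : ℝ :=
  (∫ θ in 0..π, cos θ * angularWeight l n θ) / ∫ θ in 0..π, angularWeight l n θ

theorem meanCos_pos_and_lt_mul_meanCos_sq_add (hl : 0 < l) :
    0 < meanCos l n ∧ l < l * meanCos l n ^ 2 + (n + 2) * meanCos l n := by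
  unfold meanCos
  have ibp_one := integral_sin_sq_mul_angularWeight l n (fun t => hasDerivAt_const t (1 : ℝ))
    continuous_const
  have ibp_id := integral_sin_sq_mul_angularWeight l n (g := fun t => t) hasDerivAt_id'
    continuous_const
  simp only [one_mul, zero_mul, integral_zero, add_zero] at ibp_one ibp_id
  set D := ∫ θ in 0..π, angularWeight l n θ
  set N := ∫ θ in 0..π, cos θ * angularWeight l n θ
  set S := ∫ θ in 0..π, sin θ ^ 2 * angularWeight l n θ
  set M := ∫ θ in 0..π, cos θ * sin θ ^ 2 * angularWeight l n θ
  set C := ∫ θ in 0..π, cos θ * cos θ * angularWeight l n θ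
  have pythagoras : D = S + C := by
    rw [← integral_add (Continuous.intervalIntegrable (by fun_prop) _ _)
      (Continuous.intervalIntegrable (by fun_prop) _ _)]
    refine integral_congr fun θ _ => ?_
    linear_combination -angularWeight l n θ * sin_sq_add_cos_sq θ
  have cheb := integral_cos_mul_sin_sq_mul_angularWeight_lt l n hl
  have hD : 0 < D := by
    simpa using integral_mul_angularWeight_pos l n continuous_const fun _ _ => one_pos
  have hS : 0 < S := integral_mul_angularWeight_pos l n (by fun_prop) fun θ hθ =>
    pow_pos (sin_pos_of_pos_of_lt_pi hθ.1 hθ.2) 2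
  have hN : 0 < N := by nlinarith
  have key : (n + 1) * (l * N ^ 2 + (n + 2) * N * D - l * D ^ 2) = l ^ 2 * (N * S - M * D) := by
    linear_combination
      -((n + 1) * l * D) * pythagoras + l * D * ibp_id - ((n + 2) * D + l * N) * ibp_one
  have gap : 0 < l * N ^ 2 + (n + 2) * N * D - l * D ^ 2 := by
    refine pos_of_mul_pos_right (key ▸ ?_ : 0 < (n + 1 : ℝ) * _) (by positivity)
    exact mul_pos (pow_pos hl 2) (by linarith)
  refine ⟨div_pos hN hD, ?_⟩
  have : l * (N / D) ^ 2 + (n + 2) * (N / D) - l =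
      (l * N ^ 2 + (n + 2) * N * D - l * D ^ 2) / D ^ 2 := by
    field_simp
  linarith [div_pos gap (pow_pos hD 2)]

end angularWeight

/-- For every `l > 0`, `μ(l) < λ(l)`. -/
theorem mu_lt_lambda (d : ℕ) (hd : 2 ≤ d) (μ lam : ℝ → ℝ)
    (hμ : ∀ l : ℝ, μ l = 2 * l / (Real.sqrt ((d : ℝ) ^ 2 + 4 * l ^ 2) + d))
    (hlam : ∀ l : ℝ, lam l =
      (∫ θ in (0:ℝ)..Real.pi, Real.cos θ * Real.exp (l * Real.cos θ) * Real.sin θ ^ (d - 2)) /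
      (∫ θ in (0:ℝ)..Real.pi, Real.exp (l * Real.cos θ) * Real.sin θ ^ (d - 2))) :
    ∀ l : ℝ, 0 < l → μ l < lam l := by
  obtain ⟨n, rfl⟩ : ∃ n, d = n + 2 := ⟨d - 2, by omega⟩
  intro l hl
  obtain ⟨mean_pos, riccati⟩ := meanCos_pos_and_lt_mul_meanCos_sq_add l n hl
  have lam_eq : lam l = meanCos l n := by
    simp only [hlam, meanCos, angularWeight, Nat.add_sub_cancel, mul_assoc]
  rw [hμ, lam_eq]
  push_cast
  exact two_mul_div_sqrt_add_lt hl (by positivity) mean_pos riccati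
end

section
/- For the von Mises–Fisher distribution M_{lΩ} on the sphere rS^{d-1} with l satisfying λ(l) = (σ/r²) l, the second moment in the direction Ω is ∫_{rS^{d-1}} (ω·Ω)² M_{lΩ}(ω) dω = r² − (d−1)σ. -/
open Real intervalIntegral

/-!
Write `Iₖ = ∫₀^π e^{l cos θ} sin^{d-2+k} θ dθ` and `J = ∫₀^π cos θ e^{l cos θ} sin^{d-2} θ dθ`.
Since `cos² = 1 - sin²`, the second moment is `r² (I₀ - I₂) / I₀`. Integrating
`d/dθ (sin^{d-1} θ e^{l cos θ})` over `[0, π]`, where the boundary terms vanish, gives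
`l I₂ = (d - 1) J`, and the fixed point relation says `J = (σ / r²) l I₀`;
hence `I₂ = (d - 1) (σ / r²) I₀`.
-/

section SphericalIntegrals

variable (l : ℝ) (m : ℕ)

theorem integral_exp_mul_cos_mul_sin_pow_pos :
    0 < ∫ θ in (0 : ℝ)..π, exp (l * cos θ) * sin θ ^ m := by
  refine intervalIntegral_pos_of_pos_on ((by fun_prop : Continuous _).intervalIntegrable _ _)
    (fun θ hθ => ?_) pi_pos
  have : 0 < sin θ := sin_pos_of_pos_of_lt_pi hθ.1 hθ.2
  positivity

theorem hasDerivAt_sin_pow_succ_mul_exp_mul_cos (θ : ℝ) :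
    HasDerivAt (fun x => sin x ^ (m + 1) * exp (l * cos x))
      ((m + 1) * (cos θ * exp (l * cos θ) * sin θ ^ m)
        - l * (exp (l * cos θ) * sin θ ^ (m + 2))) θ := by
  have hsin : HasDerivAt (fun x => sin x ^ (m + 1)) ((m + 1) * sin θ ^ m * cos θ) θ := by
    simpa using (hasDerivAt_sin θ).fun_pow (m + 1)
  have hexp : HasDerivAt (fun x => exp (l * cos x)) (exp (l * cos θ) * (l * -sin θ)) θ :=
    ((hasDerivAt_cos θ).const_mul l).exp
  exact (hsin.fun_mul hexp).congr_deriv (by ring)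

theorem mul_integral_exp_mul_cos_mul_sin_pow_add_two :
    l * ∫ θ in (0 : ℝ)..π, exp (l * cos θ) * sin θ ^ (m + 2)
      = (m + 1) * ∫ θ in (0 : ℝ)..π, cos θ * exp (l * cos θ) * sin θ ^ m := by
  have hparts := integral_eq_sub_of_hasDerivAt
    (fun θ _ => hasDerivAt_sin_pow_succ_mul_exp_mul_cos l m θ)
    ((by fun_prop : Continuous _).intervalIntegrable 0 π)
  rw [integral_sub ((by fun_prop : Continuous _).intervalIntegrable 0 π)
    ((by fun_prop : Continuous _).intervalIntegrable _ _), integral_const_mul,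
    integral_const_mul] at hparts
  simp only [sin_zero, sin_pi, ne_eq, add_eq_zero, one_ne_zero, and_false, not_false_eq_true,
    zero_pow, zero_mul, sub_self] at hparts
  linarith

theorem integral_sq_mul_cos_mul_exp_mul_sin_pow (r : ℝ) :
    ∫ θ in (0 : ℝ)..π, (r * cos θ) ^ 2 * exp (l * cos θ) * sin θ ^ m
      = r ^ 2 * ((∫ θ in (0 : ℝ)..π, exp (l * cos θ) * sin θ ^ m)
        - ∫ θ in (0 : ℝ)..π, exp (l * cos θ) * sin θ ^ (m + 2)) := by
  rw [← integral_sub ((by fun_prop : Continuous _).intervalIntegrable 0 π)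
    ((by fun_prop : Continuous _).intervalIntegrable _ _), ← integral_const_mul]
  refine integral_congr fun θ _ => ?_
  linear_combination (r ^ 2 * exp (l * cos θ) * sin θ ^ m) * sin_sq_add_cos_sq θ

end SphericalIntegrals

theorem vonMisesFisher_second_moment_general (d : ℕ) (hd : 2 ≤ d) (σ r : ℝ) (hr : 0 < r)
    (l : ℝ) (hl : 0 < l)
    (hfix : (∫ θ in (0:ℝ)..Real.pi,
        Real.cos θ * Real.exp (l * Real.cos θ) * Real.sin θ ^ (d - 2)) /
      (∫ θ in (0:ℝ)..Real.pi, Real.exp (l * Real.cos θ) * Real.sin θ ^ (d - 2)) =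
      σ / r ^ 2 * l) :
    (∫ θ in (0:ℝ)..Real.pi,
        (r * Real.cos θ) ^ 2 * Real.exp (l * Real.cos θ) * Real.sin θ ^ (d - 2)) /
      (∫ θ in (0:ℝ)..Real.pi, Real.exp (l * Real.cos θ) * Real.sin θ ^ (d - 2)) =
      r ^ 2 - ((d : ℝ) - 1) * σ := by
  obtain ⟨m, rfl⟩ : ∃ m, d = m + 2 := ⟨d - 2, by omega⟩
  simp only [Nat.add_sub_cancel] at hfix ⊢
  rw [integral_sq_mul_cos_mul_exp_mul_sin_pow]
  have hI₀ := (integral_exp_mul_cos_mul_sin_pow_pos l m).ne'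
  have hparts := mul_integral_exp_mul_cos_mul_sin_pow_add_two l m
  set I₀ := ∫ θ in (0 : ℝ)..π, exp (l * cos θ) * sin θ ^ m
  set I₂ := ∫ θ in (0 : ℝ)..π, exp (l * cos θ) * sin θ ^ (m + 2)
  have hJ : ∫ θ in (0 : ℝ)..π, cos θ * exp (l * cos θ) * sin θ ^ m = σ / r ^ 2 * l * I₀ := by
    rw [← hfix, div_mul_cancel₀ _ hI₀]
  have hI₂ : I₂ = (m + 1) * σ / r ^ 2 * I₀ := by
    apply mul_left_cancel₀ hl.ne'
    rw [hparts, hJ]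
    ring
  rw [hI₂]
  push_cast
  field_simp
  ring

/-- For the von Mises–Fisher distribution `M_{lΩ}` on the sphere `rS^{d-1}` with `l > 0`
satisfying `λ(l) = (σ/r²) l`, the second moment in the direction `Ω`, computed in
spherical coordinates, is `∫ (ω·Ω)² M_{lΩ}(ω) dω = r² − (d−1)σ`. -/
theorem vonMisesFisher_second_moment (d : ℕ) (hd : 2 ≤ d) (σ r : ℝ) (hσ : 0 < σ) (hr : 0 < r)
    (l : ℝ) (hl : 0 < l)
    (hfix : (∫ θ in (0:ℝ)..Real.pi,
        Real.cos θ * Real.exp (l * Real.cos θ) * Real.sin θ ^ (d - 2)) /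
      (∫ θ in (0:ℝ)..Real.pi, Real.exp (l * Real.cos θ) * Real.sin θ ^ (d - 2)) =
      σ / r ^ 2 * l) :
    (∫ θ in (0:ℝ)..Real.pi,
        (r * Real.cos θ) ^ 2 * Real.exp (l * Real.cos θ) * Real.sin θ ^ (d - 2)) /
      (∫ θ in (0:ℝ)..Real.pi, Real.exp (l * Real.cos θ) * Real.sin θ ^ (d - 2)) =
      r ^ 2 - ((d : ℝ) - 1) * σ :=
  vonMisesFisher_second_moment_general d hd σ r hr l hl hfix
end
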